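/- Let O_L, O_R ∈ SO(3), let λ, λ̃ : Fin 3 → ℝ, and suppose O_L · diag(λ) · (O_R)ᵀ = diag(λ̃). Then for every m ∈ Fin 3 with λ_m ≠ 0 and every n ∈ Fin 3, the matrix entries satisfy (O_L)_{nm} = sign(λ_m) · sign(λ̃_n) · (O_R)_{nm}, where sign denotes the real sign function (with sign(0) = 0). -/
import Mathlib


open Matrix

/-- `O` is a real 3×3 special orthogonal matrix. -/
def IsSO3 (O : Matrix (Fin 3) (Fin 3) ℝ) : Prop := O * Oᵀ = 1 ∧ O.det = 1

lemma sign_mul_self' (x : ℝ) : Real.sign x * x = |x| := by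
  rcases lt_trichotomy x 0 with h | h | h
  · simp [Real.sign_of_neg h, abs_of_neg h]
  · simp [h]
  · simp [Real.sign_of_pos h, abs_of_pos h]

lemma sign_mul_abs' (x : ℝ) : Real.sign x * |x| = x := by
  rcases lt_trichotomy x 0 with h | h | h
  · simp [Real.sign_of_neg h, abs_of_neg h]
  · simp [h]
  · simp [Real.sign_of_pos h, abs_of_pos h]

theorem left_entries_proportional_to_right_entries
    (OL OR : Matrix (Fin 3) (Fin 3) ℝ) (hOL : IsSO3 OL) (hOR : IsSO3 OR)
    (lam lamT : Fin 3 → ℝ)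
    (h : OL * Matrix.diagonal lam * ORᵀ = Matrix.diagonal lamT) :
    ∀ m : Fin 3, lam m ≠ 0 → ∀ n : Fin 3,
      OL n m = Real.sign (lam m) * Real.sign (lamT n) * OR n m := by
  intro m hm n
  have hOR₂ : ORᵀ * OR = 1 := mul_eq_one_comm.mp hOR.1
  have hOL₂ : OLᵀ * OL = 1 := mul_eq_one_comm.mp hOL.1
  have e1 : OL * Matrix.diagonal lam = Matrix.diagonal lamT * OR := by
    have := congrArg (· * OR) h
    simpa [Matrix.mul_assoc, hOR₂] using this
  have e2 : Matrix.diagonal lam * ORᵀ = OLᵀ * Matrix.diagonal lamT := by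
    have := congrArg (OLᵀ * ·) h
    simpa [← Matrix.mul_assoc, hOL₂] using this
  have h1 : OL n m * lam m = lamT n * OR n m := by
    have := congrFun (congrFun e1 n) m
    simpa [Matrix.mul_diagonal, Matrix.diagonal_mul] using this
  have h2 : lam m * OR n m = OL n m * lamT n := by
    have := congrFun (congrFun e2 m) n
    simpa [Matrix.mul_diagonal, Matrix.diagonal_mul, Matrix.transpose_apply] using this
  by_cases hOLnm : OL n m = 0
  · have h0 : lamT n * OR n m = 0 := by rw [← h1, hOLnm, zero_mul]
    rcases mul_eq_zero.mp h0 with hT | hR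
    · simp [hOLnm, hT]
    · simp [hOLnm, hR]
  · have hT : lamT n ≠ 0 := by
      intro h0
      apply hOLnm
      have : OL n m * lam m = 0 := by rw [h1, h0, zero_mul]
      exact (mul_eq_zero.mp this).resolve_right hm
    have hsq : lam m ^ 2 = lamT n ^ 2 := by
      have hx : OL n m * lam m ^ 2 = OL n m * lamT n ^ 2 := by
        calc OL n m * lam m ^ 2 = (OL n m * lam m) * lam m := by ring
        _ = (lamT n * OR n m) * lam m := by rw [h1]
        _ = lamT n * (lam m * OR n m) := by ring
        _ = lamT n * (OL n m * lamT n) := by rw [h2]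
        _ = OL n m * lamT n ^ 2 := by ring
      have := mul_left_cancel₀ hOLnm hx
      linarith
    have habs : |lam m| = |lamT n| := by
      have := sq_abs (lam m)
      have := sq_abs (lamT n)
      nlinarith [abs_nonneg (lam m), abs_nonneg (lamT n), sq_abs (lam m), sq_abs (lamT n)]
    have key : Real.sign (lam m) * (Real.sign (lamT n) * lamT n) = lam m := by
      rw [sign_mul_self', ← habs]
      exact sign_mul_abs' _
    apply mul_right_cancel₀ hm
    calc OL n m * lam m = Real.sign (lam m) * (Real.sign (lamT n) * lamT n) * OL n m := by
          rw [key]; ring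
      _ = Real.sign (lam m) * Real.sign (lamT n) * (OL n m * lamT n) := by ring
      _ = Real.sign (lam m) * Real.sign (lamT n) * (lam m * OR n m) := by rw [h2]
      _ = Real.sign (lam m) * Real.sign (lamT n) * OR n m * lam m := by ring
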